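/- Let λ > 0, α > 0, β > 0 and let f : ℝ → ℝ be integrable (f ∈ L¹(ℝ)) and bounded. Then the right tempered fractional integrals satisfy the semigroup property: for every x ∈ ℝ, I₋^{α,λ}(I₋^{β,λ} f)(x) = I₋^{α+β,λ} f(x). -/

import Mathlib

open MeasureTheory

/-- Right tempered fractional integral
`I₋^{α,λ} f(x) = (1/Γ(α)) ∫_x^{∞} (η−x)^{α−1} e^{−λ(η−x)} f(η) dη`. -/
noncomputable def rightTemperedIntegral (α lam : ℝ) (f : ℝ → ℝ) (x : ℝ) : ℝ :=
  (1 / Real.Gamma α) * ∫ η in Set.Ici x, (η - x) ^ (α - 1) * Real.exp (-lam * (η - x)) * f η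

/-!
With `fˇ(y) = f(-y)`, the operator `I₋^{γ,λ}` is `f ↦ (k_γ ⋆ fˇ)ˇ` for the tempered kernel
`k_γ(u) = u^{γ-1} e^{-λu} / Γ(γ)` on `u > 0`. The semigroup property therefore reduces to
associativity of convolution together with `k_α ⋆ k_β = k_{α+β}`, which is the Beta integral
`∫₀^v t^{α-1} (v-t)^{β-1} dt = v^{α+β-1} Γ(α)Γ(β)/Γ(α+β)` (the exponentials multiply to
`e^{-λv}`). Fubini justifies associativity at every point since `f` is integrable and bounded.
-/

open Set Real ContinuousLinearMap
open scoped Convolution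

section ConvolutionAssoc

variable {G : Type*} [AddCommGroup G] [MeasurableSpace G] {μ : Measure G}

theorem norm_convolution_le_of_norm_le {f g : G → ℝ} (hf : Integrable f μ) {C : ℝ}
    (hC : ∀ x, ‖g x‖ ≤ C) (x : G) :
    ‖(f ⋆[mul ℝ ℝ, μ] g) x‖ ≤ (∫ t, ‖f t‖ ∂μ) * C := by
  rw [← integral_mul_const]
  refine norm_integral_le_of_norm_le (hf.norm.mul_const C) (ae_of_all _ fun t => ?_)
  rw [mul_apply', norm_mul]
  exact mul_le_mul_of_nonneg_left (hC _) (norm_nonneg _)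

variable [MeasurableAdd₂ G] [MeasurableNeg G] [SFinite μ] [μ.IsAddLeftInvariant]

theorem convolutionExistsAt_of_norm_le {f g : G → ℝ} (hf : Integrable f μ)
    (hg : AEStronglyMeasurable g μ) {C : ℝ} (hC : ∀ x, ‖g x‖ ≤ C) (x : G) :
    ConvolutionExistsAt f g x (mul ℝ ℝ) μ :=
  BddAbove.convolutionExistsAt (mul ℝ ℝ) (s := univ) ⟨C, by rintro _ ⟨y, -, rfl⟩; exact hC y⟩
    MeasurableSet.univ (subset_univ _) hf.integrableOn hg

theorem convolution_assoc_of_norm_le [μ.IsAddRightInvariant] {f g h : G → ℝ}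
    (hf : Integrable f μ) (hg : Integrable g μ) (hh : Integrable h μ) {C : ℝ}
    (hC : ∀ x, ‖h x‖ ≤ C) (x : G) :
    ((f ⋆[mul ℝ ℝ, μ] g) ⋆[mul ℝ ℝ, μ] h) x = (f ⋆[mul ℝ ℝ, μ] (g ⋆[mul ℝ ℝ, μ] h)) x := by
  refine convolution_assoc _ _ _ _ (fun a b c => mul_assoc a b c) hf.aestronglyMeasurable
    hg.aestronglyMeasurable hh.aestronglyMeasurable (hf.ae_convolution_exists _ hg)
    (hg.norm.ae_convolution_exists _ hh.norm) ?_
  have hbound : ∀ y, ‖((fun t => ‖g t‖) ⋆[mul ℝ ℝ, μ] fun t => ‖h t‖) y‖ ≤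
      (∫ t, ‖g t‖ ∂μ) * C := by
    simpa only [norm_norm] using norm_convolution_le_of_norm_le hg.norm (by simpa using hC)
  exact convolutionExistsAt_of_norm_le hf.norm
    (hg.norm.integrable_convolution _ hh.norm).aestronglyMeasurable hbound x

end ConvolutionAssoc

theorem integral_rpow_mul_sub_rpow {s t a : ℝ} (hs : 0 < s) (ht : 0 < t) (ha : 0 < a) :
    ∫ u in 0..a, u ^ (s - 1) * (a - u) ^ (t - 1) =
      a ^ (s + t - 1) * ProbabilityTheory.beta s t := by
  have hbeta := Complex.betaIntegral_scaled s t ha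
  rw [Complex.betaIntegral_eq_Gamma_mul_div _ _ (by simpa) (by simpa), ← Complex.ofReal_add,
    Complex.Gamma_ofReal, Complex.Gamma_ofReal, Complex.Gamma_ofReal] at hbeta
  push_cast at hbeta
  apply Complex.ofReal_injective
  rw [← intervalIntegral.integral_ofReal, ProbabilityTheory.beta, Complex.ofReal_mul,
    Complex.ofReal_cpow ha.le]
  push_cast
  rw [← hbeta]
  refine intervalIntegral.integral_congr fun u hu => ?_
  rw [uIcc_of_le ha.le] at hu
  simp only [Complex.ofReal_cpow hu.1, Complex.ofReal_cpow (sub_nonneg.2 hu.2)]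
  push_cast
  ring

noncomputable def temperedKernel (γ lam : ℝ) : ℝ → ℝ :=
  (Ioi 0).indicator fun u => u ^ (γ - 1) * exp (-lam * u) / Gamma γ

theorem integrable_temperedKernel {γ lam : ℝ} (hγ : 0 < γ) (hlam : 0 < lam) :
    Integrable (temperedKernel γ lam) := by
  have h := integrableOn_rpow_mul_exp_neg_mul_rpow (p := 1) (by linarith : -1 < γ - 1) one_pos hlam
  simp only [rpow_one] at h
  exact (integrable_indicator_iff measurableSet_Ioi).2 (h.div_const _)

theorem rightTemperedIntegral_eq_convolution (γ lam : ℝ) (f : ℝ → ℝ) (x : ℝ) :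
    rightTemperedIntegral γ lam f x =
      (temperedKernel γ lam ⋆[mul ℝ ℝ] fun y => f (-y)) (-x) := by
  rw [convolution_mul, rightTemperedIntegral, integral_Ici_eq_integral_Ioi, ← integral_const_mul,
    ← integral_indicator measurableSet_Ioi]
  conv_rhs => rw [← integral_sub_right_eq_self _ x]
  congr 1 with η
  simp only [temperedKernel, indicator_apply, mem_Ioi, sub_pos, neg_sub, sub_neg_eq_add,
    sub_add_cancel]
  split_ifs
  · ring
  · rw [zero_mul]

theorem temperedKernel_convolution {α β : ℝ} (hα : 0 < α) (hβ : 0 < β) (lam : ℝ) :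
    temperedKernel α lam ⋆[mul ℝ ℝ] temperedKernel β lam = temperedKernel (α + β) lam := by
  rw [temperedKernel, temperedKernel, ← posConvolution_eq_convolution_indicator _ _ _ volume,
    posConvolution, temperedKernel]
  refine indicator_congr fun v (hv : 0 < v) => ?_
  have hsplit : ∀ t, (t ^ (α - 1) * exp (-lam * t) / Gamma α) *
      ((v - t) ^ (β - 1) * exp (-lam * (v - t)) / Gamma β) =
        t ^ (α - 1) * (v - t) ^ (β - 1) * (exp (-lam * v) / (Gamma α * Gamma β)) := by
    intro t
    rw [show -lam * v = -lam * t + -lam * (v - t) by ring, exp_add]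
    ring
  simp only [mul_apply', hsplit, intervalIntegral.integral_mul_const,
    integral_rpow_mul_sub_rpow hα hβ hv, ProbabilityTheory.beta]
  have := (Gamma_pos_of_pos hα).ne'
  have := (Gamma_pos_of_pos hβ).ne'
  field_simp

theorem right_tempered_integral_semigroup (lam α β : ℝ) (hlam : 0 < lam) (hα : 0 < α)
    (hβ : 0 < β) (f : ℝ → ℝ) (hf : Integrable f) (hfb : ∃ C, ∀ x, |f x| ≤ C) :
    ∀ x : ℝ, rightTemperedIntegral α lam (rightTemperedIntegral β lam f) x =
      rightTemperedIntegral (α + β) lam f x := by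
  intro x
  obtain ⟨C, hC⟩ := hfb
  have hβ_reflected : (fun y => rightTemperedIntegral β lam f (-y)) =
      temperedKernel β lam ⋆[mul ℝ ℝ] fun y => f (-y) := by
    ext y
    rw [rightTemperedIntegral_eq_convolution, neg_neg]
  rw [rightTemperedIntegral_eq_convolution, hβ_reflected,
    ← convolution_assoc_of_norm_le (integrable_temperedKernel hα hlam)
      (integrable_temperedKernel hβ hlam) hf.comp_neg (fun y => hC (-y)),
    temperedKernel_convolution hα hβ, rightTemperedIntegral_eq_convolution]
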